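/- Let p_v > 0, p_c > 0, d > 0, R ≥ 0 be real numbers and suppose 0 < g1(R/d) < 1. Then for every x₁ ∈ [0,1]: u2(x₁, 0) − u2(x₁, 1) < 0 if g1(R/d) < x₁ ≤ 1; u2(x₁, 0) − u2(x₁, 1) = 0 if x₁ = g1(R/d); and u2(x₁, 0) − u2(x₁, 1) > 0 if 0 ≤ x₁ < g1(R/d). Consequently miner 2's best response against x₁ is x₂ = 1 when x₁ > g1(R/d), any x₂ ∈ [0,1] when x₁ = g1(R/d), and x₂ = 0 when x₁ < g1(R/d). -/
import Mathlib


/-- Expected payoff of miner 2; `x1`, `x2` are the probabilities that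
miners 1 and 2 do NOT participate in mining. -/
noncomputable def u2 (pv pc d R x1 x2 : ℝ) : ℝ :=
  (1 - x2) * (x1 * (R - d / pv) +
    (1 - x1) * (pv * pc / (1 + pv * pc)) * (R - d * pc / (1 + pv * pc)))

/-- The threshold function `g1`. -/
noncomputable def g1 (pv pc z : ℝ) : ℝ :=
  pv * pc * (z - pc / (1 + pv * pc)) / ((2 * pv * pc + 1) / (pv * (1 + pv * pc)) - z)

/-- Miner 2's best-response set against the mixed strategy `x1` of miner 1. -/
noncomputable def bestResponse2 (pv pc d R x1 : ℝ) : Set ℝ :=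
  {y ∈ Set.Icc (0 : ℝ) 1 |
    ∀ y' ∈ Set.Icc (0 : ℝ) 1, u2 pv pc d R x1 y ≥ u2 pv pc d R x1 y'}

/-- Sign of miner 2's payoff difference and the resulting best response,
when `0 < g1(R/d) < 1`. -/
theorem miner2_best_response
    (pv pc d R : ℝ) (hpv : 0 < pv) (hpc : 0 < pc) (hd : 0 < d) (hR : 0 ≤ R)
    (hg : 0 < g1 pv pc (R / d)) (hg' : g1 pv pc (R / d) < 1) :
    ∀ x1 ∈ Set.Icc (0 : ℝ) 1,
      ((g1 pv pc (R / d) < x1 → u2 pv pc d R x1 0 - u2 pv pc d R x1 1 < 0) ∧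
       (x1 = g1 pv pc (R / d) → u2 pv pc d R x1 0 - u2 pv pc d R x1 1 = 0) ∧
       (x1 < g1 pv pc (R / d) → 0 < u2 pv pc d R x1 0 - u2 pv pc d R x1 1)) ∧
      ((g1 pv pc (R / d) < x1 → bestResponse2 pv pc d R x1 = {1}) ∧
       (x1 = g1 pv pc (R / d) → bestResponse2 pv pc d R x1 = Set.Icc 0 1) ∧
       (x1 < g1 pv pc (R / d) → bestResponse2 pv pc d R x1 = {0})) := by
  have hs : (0:ℝ) < 1 + pv * pc := by positivity
  have hq : (0:ℝ) < pv * (1 + pv * pc) := by positivity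
  set z := R / d with hzdef
  set N := pv * pc * (z - pc / (1 + pv * pc)) with hNdef
  set D := (2 * pv * pc + 1) / (pv * (1 + pv * pc)) - z with hDdef
  have hg1 : g1 pv pc z = N / D := rfl
  have hDpos : 0 < D := by
    rcases lt_trichotomy D 0 with h | h | h
    · exfalso
      have hNneg : N < 0 := by
        by_contra hn
        push_neg at hn
        have : N / D ≤ 0 := div_nonpos_of_nonneg_of_nonpos hn h.le
        rw [hg1] at hg; linarith
      have h1 : 2 * pv * pc + 1 < z * (pv * (1 + pv * pc)) := by
        have h' : (2 * pv * pc + 1) / (pv * (1 + pv * pc)) < z := by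
          have := sub_neg.mp h; linarith
        exact (div_lt_iff₀ hq).mp h'
      have h2 : z * (1 + pv * pc) < pc := by
        have hz2 : z - pc / (1 + pv * pc) < 0 := by
          nlinarith [mul_pos hpv hpc]
        have : z < pc / (1 + pv * pc) := by linarith
        exact (lt_div_iff₀ hs).mp this
      nlinarith [mul_pos hpv hpc]
    · rw [hg1, h, div_zero] at hg; exact absurd hg (lt_irrefl 0)
    · exact h
  have hNpos : 0 < N := by
    have h0 : 0 < N / D := by rw [← hg1]; exact hg
    have h1 := mul_pos h0 hDpos
    rwa [div_mul_cancel₀ _ (ne_of_gt hDpos)] at h1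
  intro x1 hx1
  obtain ⟨hx0, hx1'⟩ := hx1
  have hu : ∀ y, u2 pv pc d R x1 y = (1 - y) * u2 pv pc d R x1 0 := by
    intro y; simp only [u2]; ring
  have hdiff : u2 pv pc d R x1 0 - u2 pv pc d R x1 1 = u2 pv pc d R x1 0 := by
    rw [hu 1]; ring
  have key : u2 pv pc d R x1 0 = d / (1 + pv * pc) * (N - D * x1) := by
    simp only [u2, hNdef, hDdef, hzdef]
    field_simp
    ring
  have hcpos : (0:ℝ) < d / (1 + pv * pc) := by positivity
  have sign_lt : g1 pv pc z < x1 → u2 pv pc d R x1 0 < 0 := by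
    intro h
    rw [hg1] at h
    have : N < D * x1 := by
      have := (div_lt_iff₀ hDpos).mp h
      linarith [this]
    rw [key]
    exact mul_neg_of_pos_of_neg hcpos (by linarith)
  have sign_eq : x1 = g1 pv pc z → u2 pv pc d R x1 0 = 0 := by
    intro h
    rw [hg1] at h
    have : D * x1 = N := by
      rw [h]; field_simp
    rw [key, this]; ring
  have sign_gt : x1 < g1 pv pc z → 0 < u2 pv pc d R x1 0 := by
    intro h
    rw [hg1] at h
    have : D * x1 < N := by
      have := (lt_div_iff₀ hDpos).mp h
      linarith [this]
    rw [key]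
    exact mul_pos hcpos (by linarith)
  refine ⟨⟨fun h => by rw [hdiff]; exact sign_lt h,
          fun h => by rw [hdiff]; exact sign_eq h,
          fun h => by rw [hdiff]; exact sign_gt h⟩, ?_, ?_, ?_⟩
  · intro h
    have hB := sign_lt h
    ext y
    simp only [bestResponse2, Set.mem_sep_iff, Set.mem_Icc, Set.mem_singleton_iff]
    constructor
    · rintro ⟨⟨hy0, hy1⟩, hbr⟩
      have h1 := hbr 1 ⟨zero_le_one, le_refl 1⟩
      rw [hu y, hu 1] at h1
      nlinarith
    · rintro rfl
      refine ⟨⟨zero_le_one, le_refl 1⟩, fun y' hy' => ?_⟩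
      obtain ⟨hy'0, hy'1⟩ := hy'
      rw [hu 1, hu y']
      nlinarith
  · intro h
    have hB := sign_eq h
    ext y
    simp only [bestResponse2, Set.mem_sep_iff, Set.mem_Icc]
    constructor
    · rintro ⟨hy, _⟩; exact hy
    · intro hy
      refine ⟨hy, fun y' _ => ?_⟩
      rw [hu y, hu y', hB]
      simp
  · intro h
    have hB := sign_gt h
    ext y
    simp only [bestResponse2, Set.mem_sep_iff, Set.mem_Icc, Set.mem_singleton_iff]
    constructor
    · rintro ⟨⟨hy0, hy1⟩, hbr⟩
      have h0 := hbr 0 ⟨le_refl 0, zero_le_one⟩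
      rw [hu y, hu 0] at h0
      nlinarith
    · rintro rfl
      refine ⟨⟨le_refl 0, zero_le_one⟩, fun y' hy' => ?_⟩
      obtain ⟨hy'0, hy'1⟩ := hy'
      rw [hu 0, hu y']
      have h2 := mul_le_mul_of_nonneg_right (show (1:ℝ) - y' ≤ 1 - 0 by linarith) hB.le
      linarith
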